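/- arXiv:1401.3383 — 4 statements merged into one kernel-verified Lean document; each statement's English description precedes it below -/
import Mathlib

section
/- For the strict Pareto distribution with distribution function F(x) = 1 - (x/C)^(-1/γ) for x > C, where C > 0 and γ > 0, the log probability weighted moment l_r := E[(ln X)(1 - F(X))^r] satisfies l_r = ln(C)/(1+r) + γ/(1+r)^2 for every non-negative real r. -/
open Real Set Filter MeasureTheory Topology

/-! With `a = (1 + r) / γ`, the weight `(1 - F(x))^r F'(x)` is `C^a / γ · x^(-a-1)`, so `l_r`
reduces to `∫_C^∞ log x · x^(-a-1) dx`. Splitting `log x = log C + log (x / C)`, the first part is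
a plain power integral, and the second has the nonnegative integrand with primitive
`-(log (x / C) / a + 1 / a²) x^(-a)`, which vanishes at infinity since `log` grows slower than any
power. -/

section LogRpowIntegral

variable {a c : ℝ}

theorem hasDerivAt_log_div_rpow_primitive (ha : a ≠ 0) (hc : c ≠ 0) {x : ℝ} (hx : x ≠ 0) :
    HasDerivAt (fun t ↦ -(log (t / c) / a + 1 / a ^ 2) * t ^ (-a))
      (log (x / c) * x ^ (-a - 1)) x := by
  have hlog : HasDerivAt (fun t ↦ log (t / c)) x⁻¹ x :=
    (((hasDerivAt_id' x).div_const c).log (div_ne_zero hx hc)).congr_deriv (by field_simp)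
  have hpow : HasDerivAt (fun t ↦ t ^ (-a)) (-a * x ^ (-a - 1)) x :=
    hasDerivAt_rpow_const (Or.inl hx)
  have hx' : x ^ (-a) = x ^ (-a - 1) * x := by rw [← rpow_add_one hx, sub_add_cancel]
  refine ((((hlog.div_const a).add_const (1 / a ^ 2)).neg).mul hpow).congr_deriv ?_
  simp only [Pi.neg_apply, hx']
  field_simp
  ring

theorem tendsto_log_div_mul_rpow_neg_atTop (ha : 0 < a) (hc : c ≠ 0) :
    Tendsto (fun x ↦ log (x / c) * x ^ (-a)) atTop (𝓝 0) := by
  have hpow : Tendsto (fun x : ℝ ↦ x ^ (-a)) atTop (𝓝 0) := tendsto_rpow_neg_atTop ha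
  have hlog : Tendsto (fun x ↦ log x * x ^ (-a)) atTop (𝓝 0) :=
    (isLittleO_log_rpow_atTop ha).tendsto_div_nhds_zero.congr' <|
      (eventually_gt_atTop 0).mono fun x hx ↦ by simp only [rpow_neg hx.le, div_eq_mul_inv]
  have hsub := hlog.sub (hpow.const_mul (log c))
  rw [mul_zero, sub_zero] at hsub
  refine hsub.congr' <| (eventually_gt_atTop 0).mono fun x hx ↦ ?_
  dsimp only
  rw [log_div hx.ne' hc, sub_mul]

theorem tendsto_log_div_rpow_primitive_atTop (ha : 0 < a) (hc : c ≠ 0) :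
    Tendsto (fun t ↦ -(log (t / c) / a + 1 / a ^ 2) * t ^ (-a)) atTop (𝓝 0) := by
  have h := ((tendsto_log_div_mul_rpow_neg_atTop ha hc).div_const a).add
    ((tendsto_rpow_neg_atTop ha).const_mul (1 / a ^ 2))
  rw [zero_div, mul_zero, add_zero] at h
  simpa only [neg_zero, neg_mul, add_mul, div_mul_eq_mul_div] using h.neg

theorem log_div_mul_rpow_nonneg (a : ℝ) (hc : 0 < c) {x : ℝ} (hx : c ≤ x) :
    0 ≤ log (x / c) * x ^ (-a - 1) :=
  mul_nonneg (log_nonneg ((one_le_div hc).2 hx)) (rpow_nonneg (hc.trans_le hx).le _)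

theorem integrableOn_Ioi_log_div_mul_rpow (ha : 0 < a) (hc : 0 < c) :
    IntegrableOn (fun x ↦ log (x / c) * x ^ (-a - 1)) (Ioi c) :=
  integrableOn_Ioi_deriv_of_nonneg'
    (fun _ hx ↦ hasDerivAt_log_div_rpow_primitive ha.ne' hc.ne' (hc.trans_le hx).ne')
    (fun _ hx ↦ log_div_mul_rpow_nonneg a hc (le_of_lt hx))
    (tendsto_log_div_rpow_primitive_atTop ha hc.ne')

theorem integral_Ioi_log_div_mul_rpow (ha : 0 < a) (hc : 0 < c) :
    ∫ x in Ioi c, log (x / c) * x ^ (-a - 1) = c ^ (-a) / a ^ 2 := by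
  rw [integral_Ioi_of_hasDerivAt_of_nonneg'
    (fun _ hx ↦ hasDerivAt_log_div_rpow_primitive ha.ne' hc.ne' (hc.trans_le hx).ne')
    (fun _ hx ↦ log_div_mul_rpow_nonneg a hc (le_of_lt hx))
    (tendsto_log_div_rpow_primitive_atTop ha hc.ne'), div_self hc.ne', log_one]
  ring

theorem integral_Ioi_log_mul_rpow (ha : 0 < a) (hc : 0 < c) :
    ∫ x in Ioi c, log x * x ^ (-a - 1) = c ^ (-a) * (log c / a + 1 / a ^ 2) := by
  have hsplit : ∀ x ∈ Ioi c,
      log x * x ^ (-a - 1) = log c * x ^ (-a - 1) + log (x / c) * x ^ (-a - 1) := fun x hx ↦ by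
    rw [log_div (hc.trans hx).ne' hc.ne']
    ring
  have hexp : -a - 1 < -1 := by linarith
  rw [setIntegral_congr_fun measurableSet_Ioi hsplit,
    integral_add ((integrableOn_Ioi_rpow_of_lt hexp hc).const_mul _)
      (integrableOn_Ioi_log_div_mul_rpow ha hc),
    integral_const_mul, integral_Ioi_rpow_of_lt hexp hc, integral_Ioi_log_div_mul_rpow ha hc,
    sub_add_cancel]
  field_simp

end LogRpowIntegral

theorem pareto_tail_rpow_mul_density {C γ x : ℝ} (r : ℝ) (hC : 0 < C) (hγ : γ ≠ 0) (hx : 0 < x) :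
    ((x / C) ^ (-(1 / γ))) ^ r * ((1 / (γ * C)) * (x / C) ^ (-(1 / γ) - 1)) =
      C ^ ((1 + r) / γ) / γ * x ^ (-((1 + r) / γ) - 1) := by
  have hxC : 0 < x / C := div_pos hx hC
  have hpow : ((x / C) ^ (-(1 / γ))) ^ r * (x / C) ^ (-(1 / γ) - 1) =
      (x / C) ^ (-((1 + r) / γ) - 1) := by
    rw [← rpow_mul hxC.le, ← rpow_add hxC]
    ring_nf
  have hCpow : C ^ (-((1 + r) / γ) - 1) = (C ^ ((1 + r) / γ) * C)⁻¹ := by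
    rw [← rpow_add_one hC.ne', ← rpow_neg hC.le]
    ring_nf
  rw [mul_left_comm, hpow, div_rpow hx.le hC.le, hCpow]
  field_simp

/-- For the strict Pareto model with d.f. `F(x) = 1 - (x/C)^(-1/γ)` for `x > C`
(density `(1/(γC))·(x/C)^(-1/γ-1)` on `(C, ∞)`), the log probability weighted moment
`l_r = E[(ln X)(1-F(X))^r]` equals `ln C/(1+r) + γ/(1+r)²` for every real `r ≥ 0`. -/
theorem pareto_log_pwm (C γ r : ℝ) (hC : 0 < C) (hγ : 0 < γ) (hr : 0 ≤ r) :
    ∫ x in Ioi C, (Real.log x) * ((x / C) ^ (-(1 / γ))) ^ r *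
      ((1 / (γ * C)) * (x / C) ^ (-(1 / γ) - 1)) =
      Real.log C / (1 + r) + γ / (1 + r) ^ 2 := by
  have ha : 0 < (1 + r) / γ := div_pos (by linarith) hγ
  have hintegrand : ∀ x ∈ Ioi C, log x * ((x / C) ^ (-(1 / γ))) ^ r *
      ((1 / (γ * C)) * (x / C) ^ (-(1 / γ) - 1)) =
      C ^ ((1 + r) / γ) / γ * (log x * x ^ (-((1 + r) / γ) - 1)) := fun x hx ↦ by
    rw [mul_assoc, pareto_tail_rpow_mul_density r hC hγ.ne' (hC.trans hx)]
    ring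
  rw [setIntegral_congr_fun measurableSet_Ioi hintegrand, integral_const_mul,
    integral_Ioi_log_mul_rpow ha hC, rpow_neg hC.le]
  field_simp
end

section
/- Let ρ < 0. Then lim_{k→∞} (1/k) ∑_{i=1}^k (2 - 4(i-1)/(k-1)) · ((i/k)^{-ρ} - 1)/ρ = 2/((1-ρ)(2-ρ)). -/
/-!
Writing `x = i/k`, the weight is `2 - 4(i-1)/(k-1) = (2 - 4x) + 4(1-x)/(k-1)`. Both
`x ↦ (2 - 4x)(x^{-ρ} - 1)/ρ` and `x ↦ (1 - x)(x^{-ρ} - 1)/ρ` are continuous on `[0, 1]` because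
`-ρ > 0`, so their Riemann sums converge to their integrals by uniform continuity; the second
one is killed by the factor `4/(k-1) → 0`, and the first integral evaluates to
`2/(1-ρ) - 2/(2-ρ) = 2/((1-ρ)(2-ρ))`.
-/

open Finset Filter

theorem sum_Icc_one_eq_sum_range_succ {M : Type*} [AddCommMonoid M] (f : ℕ → M) (k : ℕ) :
    ∑ i ∈ Icc 1 k, f i = ∑ i ∈ range k, f (i + 1) := by
  rw [range_eq_Ico, sum_Ico_add', ← Ico_add_one_right_eq_Icc]

theorem abs_riemannSum_sub_integral_le {f : ℝ → ℝ} {k : ℕ} (hk : 0 < k) {ε : ℝ}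
    (hf : ContinuousOn f (Set.Icc 0 1))
    (hε : ∀ x ∈ Set.Icc (0 : ℝ) 1, ∀ y ∈ Set.Icc (0 : ℝ) 1, |x - y| ≤ 1 / k → |f x - f y| ≤ ε) :
    |(1 / (k : ℝ)) * ∑ i ∈ Icc 1 k, f (i / k) - ∫ x in (0 : ℝ)..1, f x| ≤ ε := by
  have hk' : (0 : ℝ) < k := by exact_mod_cast hk
  set t : ℕ → ℝ := fun i => i / k
  have ht_mem : ∀ i ≤ k, t i ∈ Set.Icc (0 : ℝ) 1 := fun i hi =>
    ⟨by positivity, div_le_one_of_le₀ (by exact_mod_cast hi) hk'.le⟩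
  have hcell : ∀ i < k, Set.uIcc (t i) (t (i + 1)) ⊆ Set.Icc 0 1 := fun i hi =>
    Set.uIcc_subset_Icc (ht_mem i hi.le) (ht_mem (i + 1) hi)
  have hsplit : ∫ x in (0 : ℝ)..1, f x = ∑ i ∈ range k, ∫ x in t i..t (i + 1), f x := by
    rw [intervalIntegral.sum_integral_adjacent_intervals
      fun i hi => (hf.mono (hcell i hi)).intervalIntegrable]
    simp [t, hk'.ne']
  have hcell_err : ∀ i ∈ range k,
      |(1 / (k : ℝ)) * f (t (i + 1)) - ∫ x in t i..t (i + 1), f x| ≤ ε / k := by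
    intro i hi
    have hi : i < k := mem_range.mp hi
    have hlen : t (i + 1) - t i = 1 / k := by simp only [t]; push_cast; field_simp; ring
    have hint : IntervalIntegrable f MeasureTheory.volume (t i) (t (i + 1)) :=
      (hf.mono (hcell i hi)).intervalIntegrable
    have hconst : (1 / (k : ℝ)) * f (t (i + 1)) = ∫ _ in t i..t (i + 1), f (t (i + 1)) := by
      rw [intervalIntegral.integral_const, hlen, smul_eq_mul]
    rw [hconst,
      ← intervalIntegral.integral_sub (intervalIntegrable_const (c := f (t (i + 1)))) hint]
    calc |∫ x in t i..t (i + 1), (f (t (i + 1)) - f x)|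
        ≤ ε * |t (i + 1) - t i| := by
          refine (Real.norm_eq_abs _).symm.trans_le
            (intervalIntegral.norm_integral_le_of_norm_le_const fun x hx => ?_)
          rw [Real.norm_eq_abs]
          have hx' := Set.uIoc_subset_uIcc hx
          rw [Set.uIcc_of_le (by rw [← sub_nonneg, hlen]; positivity)] at hx'
          refine hε _ (ht_mem _ hi) _ (hcell i hi (Set.Icc_subset_uIcc hx')) ?_
          rw [abs_of_nonneg (by linarith [hx'.2]), ← hlen]
          linarith [hx'.1]
      _ = ε / k := by rw [hlen, abs_of_pos (by positivity)]; ring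
  calc |(1 / (k : ℝ)) * ∑ i ∈ Icc 1 k, f (i / k) - ∫ x in (0 : ℝ)..1, f x|
      = |∑ i ∈ range k, ((1 / (k : ℝ)) * f (t (i + 1)) - ∫ x in t i..t (i + 1), f x)| := by
        rw [sum_Icc_one_eq_sum_range_succ, hsplit, mul_sum, sum_sub_distrib]
    _ ≤ ∑ i ∈ range k, ε / k := abs_sum_le_sum_abs _ _ |>.trans (sum_le_sum hcell_err)
    _ = ε := by rw [sum_const, card_range, nsmul_eq_mul]; field_simp

theorem tendsto_riemannSum_integral {f : ℝ → ℝ} (hf : ContinuousOn f (Set.Icc 0 1)) :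
    Tendsto (fun k : ℕ => (1 / (k : ℝ)) * ∑ i ∈ Icc 1 k, f (i / k)) atTop
      (nhds (∫ x in (0 : ℝ)..1, f x)) := by
  rw [Metric.tendsto_atTop]
  intro ε hε
  obtain ⟨δ, hδ, hfδ⟩ := Metric.uniformContinuousOn_iff.mp
    (isCompact_Icc.uniformContinuousOn_of_continuous hf) (ε / 2) (half_pos hε)
  obtain ⟨N, hN⟩ := exists_nat_gt (1 / δ)
  have hN0 : (0 : ℝ) < N := (one_div_pos.mpr hδ).trans hN
  refine ⟨N, fun k hk => ?_⟩
  have hkN : (N : ℝ) ≤ k := by exact_mod_cast hk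
  have hk0 : 0 < k := by exact_mod_cast hN0.trans_le hkN
  have hmesh : 1 / (k : ℝ) < δ :=
    (one_div_le_one_div_of_le hN0 hkN).trans_lt ((one_div_lt hδ hN0).mp hN)
  refine (abs_riemannSum_sub_integral_le hk0 hf fun x hx y hy hxy => ?_).trans_lt (half_lt_self hε)
  exact (hfδ x hx y hy (hxy.trans_lt hmesh)).le

theorem integral_weight_mul_rpow_sub_one_div {ρ : ℝ} (hρ0 : ρ ≠ 0) (hρ1 : ρ < 1) :
    ∫ x in (0 : ℝ)..1, (2 - 4 * x) * ((x ^ (-ρ) - 1) / ρ) = 2 / ((1 - ρ) * (2 - ρ)) := by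
  have hexp : ∀ x ∈ Set.uIcc (0 : ℝ) 1, (2 - 4 * x) * ((x ^ (-ρ) - 1) / ρ)
      = (2 * x ^ (-ρ) - 4 * x ^ (-ρ + 1) - 2 + 4 * x) / ρ := by
    intro x hx
    rw [Set.uIcc_of_le zero_le_one] at hx
    rw [Real.rpow_add_one' hx.1 (by linarith)]
    ring
  rw [intervalIntegral.integral_congr hexp, intervalIntegral.integral_div]
  have hA : IntervalIntegrable (fun x : ℝ => 2 * x ^ (-ρ)) MeasureTheory.volume 0 1 :=
    (intervalIntegral.intervalIntegrable_rpow' (by linarith)).const_mul 2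
  have hB : IntervalIntegrable (fun x : ℝ => 4 * x ^ (-ρ + 1)) MeasureTheory.volume 0 1 :=
    (intervalIntegral.intervalIntegrable_rpow' (by linarith)).const_mul 4
  rw [intervalIntegral.integral_add ((hA.sub hB).sub intervalIntegrable_const)
      (intervalIntegral.intervalIntegrable_id.const_mul 4),
    intervalIntegral.integral_sub (hA.sub hB) intervalIntegrable_const,
    intervalIntegral.integral_sub hA hB, intervalIntegral.integral_const_mul,
    intervalIntegral.integral_const_mul, intervalIntegral.integral_const_mul,
    integral_rpow (.inl (by linarith)), integral_rpow (.inl (by linarith)), integral_id]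
  have h1 : 1 - ρ ≠ 0 := by linarith
  have h2 : 2 - ρ ≠ 0 := by linarith
  simp only [Real.one_rpow, Real.zero_rpow (show -ρ + 1 ≠ 0 by linarith),
    Real.zero_rpow (show -ρ + 1 + 1 ≠ 0 by linarith), intervalIntegral.integral_const, smul_eq_mul]
  rw [show -ρ + 1 = 1 - ρ by ring, show 1 - ρ + 1 = 2 - ρ by ring]
  field_simp
  ring

/-- For `ρ < 0`,
`(1/k) ∑_{i=1}^k (2 - 4(i-1)/(k-1)) · ((i/k)^{-ρ} - 1)/ρ → 2/((1-ρ)(2-ρ))` as `k → ∞`. -/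
theorem plpwm_bias_limit (ρ : ℝ) (hρ : ρ < 0) :
    Tendsto (fun k : ℕ => (1 / (k : ℝ)) * ∑ i ∈ Finset.Icc 1 k,
        (2 - 4 * ((i : ℝ) - 1) / ((k : ℝ) - 1)) * (((i : ℝ) / (k : ℝ)) ^ (-ρ) - 1) / ρ)
      atTop (nhds (2 / ((1 - ρ) * (2 - ρ)))) := by
  set h : ℝ → ℝ := fun x => (x ^ (-ρ) - 1) / ρ
  have hcont : Continuous h :=
    ((Real.continuous_rpow_const (by linarith)).sub continuous_const).div_const ρ
  have hweighted := tendsto_riemannSum_integral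
    (f := fun x => (2 - 4 * x) * h x) (by fun_prop)
  rw [integral_weight_mul_rpow_sub_one_div hρ.ne (by linarith)] at hweighted
  have hshift : Tendsto (fun k : ℕ => 4 / ((k : ℝ) - 1)) atTop (nhds 0) := by
    have : Tendsto (fun k : ℕ => (k : ℝ) + (-1)) atTop atTop :=
      tendsto_atTop_add_const_right _ _ tendsto_natCast_atTop_atTop
    exact tendsto_const_nhds.div_atTop (by simpa only [← sub_eq_add_neg] using this)
  have hcorrection := hshift.mul (tendsto_riemannSum_integral
    (f := fun x => (1 - x) * h x) (by fun_prop))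
  rw [zero_mul] at hcorrection
  refine (add_zero (2 / ((1 - ρ) * (2 - ρ))) ▸ hweighted.add hcorrection).congr' ?_
  filter_upwards [eventually_ge_atTop 2] with k hk
  have hk0 : (k : ℝ) ≠ 0 := by positivity
  have hk1 : (k : ℝ) - 1 ≠ 0 := by
    have : (2 : ℝ) ≤ k := by exact_mod_cast hk
    linarith
  simp only [h, mul_sum, ← sum_add_distrib]
  refine sum_congr rfl fun i _ => ?_
  field_simp
  ring
end

section
/- Define AREFF(ρ) = ((3/4)^{-ρ}·(1 - ρ/2))^{1/(1-2ρ)} for ρ < 0. Then there exists a unique ρ* < 0 such that AREFF(ρ) > 1 for ρ* < ρ < 0 and AREFF(ρ) < 1 for ρ < ρ*, and ρ* ∈ (-3.55, -3.53). -/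
open Real Set

noncomputable def Gfun (ρ : ℝ) : ℝ := ρ * Real.log (4/3) + Real.log (1 - ρ/2)

lemma log34_eq : Real.log (3/4 : ℝ) = - Real.log (4/3) := by
  rw [show (3/4 : ℝ) = ((4/3 : ℝ))⁻¹ by norm_num, Real.log_inv]

lemma areff_iff {ρ : ℝ} (hρ : ρ < 0) :
    (1 < (((3 / 4 : ℝ) ^ (-ρ)) * (1 - ρ / 2)) ^ (1 / (1 - 2 * ρ)) ↔ 0 < Gfun ρ) ∧
    ((((3 / 4 : ℝ) ^ (-ρ)) * (1 - ρ / 2)) ^ (1 / (1 - 2 * ρ)) < 1 ↔ Gfun ρ < 0) := by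
  have hb : (0:ℝ) < (3/4 : ℝ) ^ (-ρ) := Real.rpow_pos_of_pos (by norm_num) _
  have h2 : (0:ℝ) < 1 - ρ/2 := by linarith
  have hpos : (0:ℝ) < ((3 / 4 : ℝ) ^ (-ρ)) * (1 - ρ / 2) := mul_pos hb h2
  have he : (0:ℝ) < 1 / (1 - 2 * ρ) := div_pos one_pos (by linarith)
  have hlog : Real.log (((3 / 4 : ℝ) ^ (-ρ)) * (1 - ρ / 2)) = Gfun ρ := by
    rw [Real.log_mul (ne_of_gt hb) (ne_of_gt h2), Real.log_rpow (by norm_num), log34_eq, Gfun]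
    ring
  constructor
  · rw [Real.one_lt_rpow_iff_of_pos hpos, ← hlog, ← Real.log_pos_iff hpos.le]
    constructor
    · rintro (⟨h1, _⟩ | ⟨_, h2'⟩)
      · exact (Real.log_pos_iff hpos.le).mpr ((Real.log_pos_iff hpos.le).mp h1)
      · linarith
    · intro h1; exact Or.inl ⟨h1, he⟩
  · rw [Real.rpow_lt_one_iff_of_pos hpos, ← hlog, ← Real.log_neg_iff hpos]
    constructor
    · rintro (⟨_, h2'⟩ | ⟨h1, _⟩)
      · linarith
      · exact h1
    · intro h1; exact Or.inr ⟨h1, he⟩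

lemma numeric1 : 0 < Gfun (-3.53) := by
  have key : ((4:ℝ)/3) ^ (353:ℕ) < ((553:ℝ)/200) ^ (100:ℕ) := by
    rw [show (353:ℕ) = 200 + 153 by norm_num, pow_add]; norm_num
  have h1 : Real.log (((4:ℝ)/3) ^ (353:ℕ)) < Real.log (((553:ℝ)/200) ^ (100:ℕ)) :=
    Real.log_lt_log (by positivity) key
  rw [Real.log_pow, Real.log_pow] at h1
  push_cast at h1
  have : (1:ℝ) - (-3.53)/2 = 553/200 := by norm_num
  rw [Gfun, this]
  nlinarith [h1]

lemma numeric2 : Gfun (-3.55) < 0 := by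
  have key : ((111:ℝ)/40) ^ (100:ℕ) < ((4:ℝ)/3) ^ (355:ℕ) := by
    rw [show (355:ℕ) = 200 + 155 by norm_num, pow_add]; norm_num
  have h1 : Real.log (((111:ℝ)/40) ^ (100:ℕ)) < Real.log (((4:ℝ)/3) ^ (355:ℕ)) :=
    Real.log_lt_log (by positivity) key
  rw [Real.log_pow, Real.log_pow] at h1
  push_cast at h1
  have : (1:ℝ) - (-3.55)/2 = 111/40 := by norm_num
  rw [Gfun, this]
  nlinarith [h1]

lemma Gcont : ContinuousOn Gfun (Icc (-3.55 : ℝ) (-3.53)) := by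
  apply ContinuousOn.add
  · exact (continuous_id.mul continuous_const).continuousOn
  · apply ContinuousOn.log
    · fun_prop
    · intro x hx
      have := hx.2
      have : x ≤ -3.53 := hx.2
      have : (0:ℝ) < 1 - x/2 := by linarith
      linarith

/-- Concavity step: if `Gfun ρ* = 0` then `Gfun ρ > 0` on `(ρ*, 0)`. -/
lemma signA {ρs ρ : ℝ} (hρs : ρs < 0) (h0 : Gfun ρs = 0) (h1 : ρs < ρ) (h2 : ρ < 0) :
    0 < Gfun ρ := by
  set a : ℝ := ρ / ρs with ha_def
  have hρs' : ρs ≠ 0 := ne_of_lt hρs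
  have ha : 0 < a := div_pos_of_neg_of_neg h2 hρs
  have ha1 : a < 1 := by
    rw [ha_def, div_lt_one_of_neg hρs]
    exact h1
  have hab : a + (1 - a) = 1 := by ring
  have haρ : a * ρs = ρ := div_mul_cancel₀ ρ hρs'
  have hx : (1 - ρs/2 : ℝ) ∈ Ioi (0:ℝ) := by simp; linarith
  have hy : (1:ℝ) ∈ Ioi (0:ℝ) := by simp
  have hne : (1 - ρs/2 : ℝ) ≠ 1 := by intro h; nlinarith
  have conc := strictConcaveOn_log_Ioi.2 hx hy hne ha (by linarith : (0:ℝ) < 1 - a) hab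
  simp only [smul_eq_mul, Real.log_one, mul_one, mul_zero, add_zero] at conc
  have harg : a * (1 - ρs/2) + (1 - a) = 1 - ρ/2 := by
    have : a * (ρs/2) = ρ/2 := by rw [← haρ]; ring
    nlinarith
  rw [harg] at conc
  have hlogs : Real.log (1 - ρs/2) = -ρs * Real.log (4/3) := by
    have := h0; rw [Gfun] at this; linarith
  have : a * Real.log (1 - ρs/2) = -ρ * Real.log (4/3) := by
    rw [hlogs, ← haρ]; ring
  rw [Gfun]; linarith
/-- Concavity step: if `Gfun ρ* = 0` then `Gfun ρ < 0` for `ρ < ρ*`. -/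
lemma signB {ρs ρ : ℝ} (hρs : ρs < 0) (h0 : Gfun ρs = 0) (h1 : ρ < ρs) :
    Gfun ρ < 0 := by
  have hρ : ρ < 0 := lt_trans h1 hρs
  set a : ℝ := ρs / ρ with ha_def
  have hρ' : ρ ≠ 0 := ne_of_lt hρ
  have ha : 0 < a := div_pos_of_neg_of_neg hρs hρ
  have ha1 : a < 1 := by
    rw [ha_def, div_lt_one_of_neg hρ]
    exact h1
  have hab : a + (1 - a) = 1 := by ring
  have haρ : a * ρ = ρs := div_mul_cancel₀ ρs hρ'
  have hx : (1 - ρ/2 : ℝ) ∈ Ioi (0:ℝ) := by simp; linarith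
  have hy : (1:ℝ) ∈ Ioi (0:ℝ) := by simp
  have hne : (1 - ρ/2 : ℝ) ≠ 1 := by intro h; nlinarith
  have conc := strictConcaveOn_log_Ioi.2 hx hy hne ha (by linarith : (0:ℝ) < 1 - a) hab
  simp only [smul_eq_mul, Real.log_one, mul_one, mul_zero, add_zero] at conc
  have harg : a * (1 - ρ/2) + (1 - a) = 1 - ρs/2 := by
    have : a * (ρ/2) = ρs/2 := by rw [← haρ]; ring
    nlinarith
  rw [harg] at conc
  have hlogs : Real.log (1 - ρs/2) = -ρs * Real.log (4/3) := by
    have := h0; rw [Gfun] at this; linarith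
  have key : a * Real.log (1 - ρ/2) < -ρs * Real.log (4/3) := by rw [← hlogs]; exact conc
  have : Real.log (1 - ρ/2) < -ρ * Real.log (4/3) := by
    have h' : a * Real.log (1 - ρ/2) < a * (-ρ * Real.log (4/3)) := by
      calc a * Real.log (1 - ρ/2) < -ρs * Real.log (4/3) := key
        _ = a * (-ρ * Real.log (4/3)) := by rw [← haρ]; ring
    exact lt_of_mul_lt_mul_left h' (le_of_lt ha)
  rw [Gfun]; linarith

/-- There is a unique `ρ* < 0`, lying in `(-3.55, -3.53)`, such that
`AREFF(ρ) > 1` for `ρ* < ρ < 0` and `AREFF(ρ) < 1` for `ρ < ρ*`, where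
`AREFF(ρ) = ((3/4)^{-ρ}(1-ρ/2))^{1/(1-2ρ)}`. -/
theorem areff_threshold :
    ∃! ρstar : ℝ, ρstar < 0 ∧ ρstar ∈ Set.Ioo (-3.55 : ℝ) (-3.53 : ℝ) ∧
      (∀ ρ : ℝ, ρstar < ρ → ρ < 0 →
        1 < (((3 / 4 : ℝ) ^ (-ρ)) * (1 - ρ / 2)) ^ (1 / (1 - 2 * ρ))) ∧
      (∀ ρ : ℝ, ρ < ρstar →
        (((3 / 4 : ℝ) ^ (-ρ)) * (1 - ρ / 2)) ^ (1 / (1 - 2 * ρ)) < 1) := by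
  obtain ⟨ρs, hmem, hGs⟩ : ∃ ρs ∈ Ioo (-3.55 : ℝ) (-3.53), Gfun ρs = 0 := by
    have h := intermediate_value_Ioo (by norm_num : (-3.55 : ℝ) ≤ -3.53) Gcont
    have h0 : (0:ℝ) ∈ Ioo (Gfun (-3.55)) (Gfun (-3.53)) := ⟨numeric2, numeric1⟩
    obtain ⟨x, hx, hfx⟩ := h h0
    exact ⟨x, hx, hfx⟩
  have hρs : ρs < 0 := lt_trans hmem.2 (by norm_num)
  refine ⟨ρs, ⟨hρs, hmem, ?_, ?_⟩, ?_⟩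
  · intro ρ h1 h2
    exact ((areff_iff h2).1).mpr (signA hρs hGs h1 h2)
  · intro ρ h1
    exact ((areff_iff (lt_trans h1 hρs)).2).mpr (signB hρs hGs h1)
  · rintro y ⟨hy0, hymem, hyA, hyB⟩
    by_contra hne
    rcases lt_or_gt_of_ne hne with h | h
    · -- y < ρs
      obtain ⟨z, hz1, hz2⟩ := exists_between h
      have hg : 1 < (((3 / 4 : ℝ) ^ (-z)) * (1 - z / 2)) ^ (1 / (1 - 2 * z)) :=
        hyA z hz1 (lt_trans hz2 hρs)
      have hl : (((3 / 4 : ℝ) ^ (-z)) * (1 - z / 2)) ^ (1 / (1 - 2 * z)) < 1 :=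
        ((areff_iff (lt_trans hz2 hρs)).2).mpr (signB hρs hGs hz2)
      linarith
    · -- ρs < y
      obtain ⟨z, hz1, hz2⟩ := exists_between h
      have hg : 1 < (((3 / 4 : ℝ) ^ (-z)) * (1 - z / 2)) ^ (1 / (1 - 2 * z)) :=
        ((areff_iff (lt_trans hz2 hy0)).1).mpr (signA hρs hGs hz1 (lt_trans hz2 hy0))
      have hl : (((3 / 4 : ℝ) ^ (-z)) * (1 - z / 2)) ^ (1 / (1 - 2 * z)) < 1 :=
        hyB z hz2
      linarith
end

section
/- The function AREFF(ρ) = ((3/4)^{-ρ}(1 - ρ/2))^{1/(1-2ρ)}, ρ < 0, has a unique critical point, which is a maximum, located in the interval (-0.8, -0.6). -/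
/-! On `ρ < 1/2` we have `AREFF = exp ∘ G` with `G ρ = N ρ / (1 - 2ρ)` and
`N ρ = ρ log (4/3) + log (1 - ρ/2)`, so `AREFF' = AREFF · h / (1 - 2ρ)²` where
`h = N' · (1 - 2ρ) + 2 N`. Since `h' = N'' · (1 - 2ρ) = -(1 - 2ρ)/(2 - ρ)² < 0`, `h` is strictly
decreasing; it is positive at `-0.8` and negative at `-0.6`, hence it vanishes at exactly one
`ρc`, and `G` (so also `AREFF`) increases up to `ρc` and decreases after it. -/

open Set Real

theorem le_of_hasDerivAt_pos_of_neg {f f' : ℝ → ℝ} {b c x : ℝ} (hcb : c < b)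
    (hf : ∀ y < b, HasDerivAt f (f' y) y) (hpos : ∀ y < c, 0 < f' y)
    (hneg : ∀ y ∈ Ioo c b, f' y < 0) (hx : x < b) : f x ≤ f c := by
  have hcont : ContinuousOn f (Iio b) := fun y hy => (hf y hy).continuousAt.continuousWithinAt
  rcases le_or_gt x c with hxc | hcx
  · refine (strictMonoOn_of_hasDerivWithinAt_pos (f' := f') (convex_Iic c)
      (hcont.mono fun y hy => lt_of_le_of_lt hy hcb) (fun y hy => ?_) (fun y hy => ?_)).monotoneOn
      hxc self_mem_Iic hxc
    · rw [interior_Iic] at hy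
      exact (hf y (hy.trans hcb)).hasDerivWithinAt
    · rw [interior_Iic] at hy
      exact hpos y hy
  · refine (strictAntiOn_of_hasDerivWithinAt_neg (f' := f') (convex_Ico c b)
      (hcont.mono fun y hy => hy.2) (fun y hy => ?_) (fun y hy => ?_)).antitoneOn
      (left_mem_Ico.2 hcb) ⟨hcx.le, hx⟩ hcx.le
    · rw [interior_Ico] at hy
      exact (hf y hy.2).hasDerivWithinAt
    · rw [interior_Ico] at hy
      exact hneg y hy

theorem exp_div_natCast_pow (p : ℕ) {q : ℕ} (hq : q ≠ 0) : exp (p / q) ^ q = exp 1 ^ p := by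
  rw [← exp_nat_mul, ← exp_nat_mul, mul_div_cancel₀ _ (by exact_mod_cast hq), mul_one]

theorem log_196_div_75_gt : (13 / 14 : ℝ) < log (196 / 75) := by
  rw [lt_log_iff_exp_lt (by norm_num)]
  refine lt_of_pow_lt_pow_left₀ 14 (by norm_num) ?_
  have h := exp_div_natCast_pow 13 (q := 14) (by norm_num)
  push_cast at h
  rw [h]
  calc exp 1 ^ 13 < 2.7182818286 ^ 13 := pow_lt_pow_left₀ exp_one_lt_d9 (exp_pos 1).le (by norm_num)
    _ < (196 / 75) ^ 14 := by norm_num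

theorem log_169_div_75_lt : log (169 / 75) < (11 / 13 : ℝ) := by
  rw [log_lt_iff_lt_exp (by norm_num)]
  refine lt_of_pow_lt_pow_left₀ 13 (exp_pos _).le ?_
  have h := exp_div_natCast_pow 11 (q := 13) (by norm_num)
  push_cast at h
  rw [h]
  calc (169 / 75 : ℝ) ^ 13 < 2.7182818283 ^ 11 := by norm_num
    _ < exp 1 ^ 11 := pow_lt_pow_left₀ exp_one_gt_d9 (by norm_num) (by norm_num)

noncomputable def areff (ρ : ℝ) : ℝ := ((3 / 4 : ℝ) ^ (-ρ) * (1 - ρ / 2)) ^ (1 / (1 - 2 * ρ))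

noncomputable def logAreffNumer (ρ : ℝ) : ℝ := ρ * log (4 / 3) + log (1 - ρ / 2)

noncomputable def logAreff (ρ : ℝ) : ℝ := logAreffNumer ρ / (1 - 2 * ρ)

noncomputable def logAreffDerivNumer (ρ : ℝ) : ℝ :=
  (log (4 / 3) - 1 / (2 - ρ)) * (1 - 2 * ρ) + 2 * logAreffNumer ρ

theorem areff_eq_exp_logAreff {ρ : ℝ} (hρ : ρ < 1 / 2) : areff ρ = exp (logAreff ρ) := by
  have hb : 0 < (3 / 4 : ℝ) ^ (-ρ) := rpow_pos_of_pos (by norm_num) _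
  have h1 : 0 < 1 - ρ / 2 := by linarith
  rw [areff, rpow_def_of_pos (mul_pos hb h1), log_mul hb.ne' h1.ne', log_rpow (by norm_num),
    show (3 / 4 : ℝ) = (4 / 3)⁻¹ by norm_num, log_inv, logAreff, logAreffNumer]
  congr 1
  ring

theorem hasDerivAt_logAreffNumer {ρ : ℝ} (hρ : ρ < 2) :
    HasDerivAt logAreffNumer (log (4 / 3) - 1 / (2 - ρ)) ρ := by
  have h1 : 1 - ρ / 2 ≠ 0 := by linarith
  have h2 : 2 - ρ ≠ 0 := by linarith
  have hin : HasDerivAt (fun x : ℝ => 1 - x / 2) (-(1 / 2)) ρ := by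
    simpa using ((hasDerivAt_id ρ).div_const 2).const_sub 1
  refine (((hasDerivAt_id ρ).mul_const (log (4 / 3))).add (hin.log h1)).congr_deriv ?_
  field_simp
  ring

theorem hasDerivAt_logAreff {ρ : ℝ} (hρ : ρ < 1 / 2) :
    HasDerivAt logAreff (logAreffDerivNumer ρ / (1 - 2 * ρ) ^ 2) ρ := by
  have hden : HasDerivAt (fun x : ℝ => 1 - 2 * x) (-2) ρ := by
    simpa using ((hasDerivAt_id ρ).const_mul 2).const_sub 1
  refine ((hasDerivAt_logAreffNumer (by linarith)).div hden (by linarith)).congr_deriv ?_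
  rw [logAreffDerivNumer]
  ring

theorem hasDerivAt_logAreffDerivNumer {ρ : ℝ} (hρ : ρ < 2) :
    HasDerivAt logAreffDerivNumer (-(1 - 2 * ρ) / (2 - ρ) ^ 2) ρ := by
  have h2 : 2 - ρ ≠ 0 := by linarith
  have hrecip : HasDerivAt (fun x : ℝ => 1 / (2 - x)) (1 / (2 - ρ) ^ 2) ρ := by
    simpa [one_div, Pi.inv_def] using ((hasDerivAt_id ρ).const_sub 2).inv h2
  have hden : HasDerivAt (fun x : ℝ => 1 - 2 * x) (-2) ρ := by
    simpa using ((hasDerivAt_id ρ).const_mul 2).const_sub 1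
  refine (((hrecip.const_sub (log (4 / 3))).mul hden).add
    ((hasDerivAt_logAreffNumer hρ).const_mul 2)).congr_deriv ?_
  field_simp
  ring

theorem strictAntiOn_logAreffDerivNumer : StrictAntiOn logAreffDerivNumer (Iio (1 / 2)) := by
  refine strictAntiOn_of_hasDerivWithinAt_neg (f' := fun x => -(1 - 2 * x) / (2 - x) ^ 2)
    (convex_Iio _) (fun x hx => ?_) (fun x hx => ?_) (fun x hx => ?_)
  all_goals simp only [interior_Iio, mem_Iio] at hx
  · exact (hasDerivAt_logAreffDerivNumer (by linarith)).continuousAt.continuousWithinAt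
  · exact (hasDerivAt_logAreffDerivNumer (by linarith)).hasDerivWithinAt
  · exact div_neg_of_neg_of_pos (by linarith) (by nlinarith)

theorem logAreffDerivNumer_neg_four_fifths_pos : 0 < logAreffDerivNumer (-0.8) := by
  have h : logAreffDerivNumer (-0.8) = log (196 / 75) - 13 / 14 := by
    rw [show (196 / 75 : ℝ) = 4 / 3 * (7 / 5) ^ 2 by norm_num, log_mul (by norm_num) (by norm_num),
      log_pow, logAreffDerivNumer, logAreffNumer, show (1 : ℝ) - -0.8 / 2 = 7 / 5 by norm_num]
    norm_num
    ring
  linarith [log_196_div_75_gt]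

theorem logAreffDerivNumer_neg_three_fifths_neg : logAreffDerivNumer (-0.6) < 0 := by
  have h : logAreffDerivNumer (-0.6) = log (169 / 75) - 11 / 13 := by
    rw [show (169 / 75 : ℝ) = 4 / 3 * (13 / 10) ^ 2 by norm_num, log_mul (by norm_num) (by norm_num),
      log_pow, logAreffDerivNumer, logAreffNumer, show (1 : ℝ) - -0.6 / 2 = 13 / 10 by norm_num]
    norm_num
    ring
  linarith [log_169_div_75_lt]

theorem exists_logAreffDerivNumer_eq_zero :
    ∃ ρc ∈ Ioo (-0.8 : ℝ) (-0.6), logAreffDerivNumer ρc = 0 := by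
  have hcont : ContinuousOn logAreffDerivNumer (Icc (-0.8) (-0.6)) := fun x hx =>
    (hasDerivAt_logAreffDerivNumer (by linarith [hx.2])).continuousAt.continuousWithinAt
  exact intermediate_value_Ioo' (by norm_num) hcont
    ⟨logAreffDerivNumer_neg_three_fifths_neg, logAreffDerivNumer_neg_four_fifths_pos⟩

theorem deriv_areff {ρ : ℝ} (hρ : ρ < 1 / 2) :
    deriv areff ρ = exp (logAreff ρ) * (logAreffDerivNumer ρ / (1 - 2 * ρ) ^ 2) := by
  have h : areff =ᶠ[nhds ρ] fun x => exp (logAreff x) := by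
    filter_upwards [Iio_mem_nhds hρ] with x hx using areff_eq_exp_logAreff hx
  rw [h.deriv_eq]
  exact (hasDerivAt_logAreff hρ).exp.deriv

theorem deriv_areff_eq_zero_iff {ρ : ℝ} (hρ : ρ < 1 / 2) :
    deriv areff ρ = 0 ↔ logAreffDerivNumer ρ = 0 := by
  have hden : (1 - 2 * ρ) ^ 2 ≠ 0 := pow_ne_zero 2 (by linarith)
  rw [deriv_areff hρ, mul_eq_zero, div_eq_zero_iff]
  simp [exp_ne_zero, hden]

/-- `AREFF(ρ) = ((3/4)^{-ρ}(1-ρ/2))^{1/(1-2ρ)}`, `ρ < 0`, has a unique critical point,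
which is a maximum, located in `(-0.8, -0.6)`. -/
theorem areff_unique_max :
    let AREFF : ℝ → ℝ := fun ρ => (((3 / 4 : ℝ) ^ (-ρ)) * (1 - ρ / 2)) ^ (1 / (1 - 2 * ρ))
    ∃ ρc : ℝ, ρc ∈ Ioo (-0.8 : ℝ) (-0.6 : ℝ) ∧
      (∀ ρ : ℝ, ρ < 0 → (deriv AREFF ρ = 0 ↔ ρ = ρc)) ∧
      ∀ ρ : ℝ, ρ < 0 → AREFF ρ ≤ AREFF ρc := by
  show ∃ ρc, ρc ∈ Ioo (-0.8 : ℝ) (-0.6) ∧ (∀ ρ < 0, (deriv areff ρ = 0 ↔ ρ = ρc)) ∧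
    ∀ ρ < 0, areff ρ ≤ areff ρc
  obtain ⟨ρc, hmem, hroot⟩ := exists_logAreffDerivNumer_eq_zero
  have hρc : ρc < 1 / 2 := by linarith [hmem.2]
  refine ⟨ρc, hmem, fun ρ hρ => ?_, fun ρ hρ => ?_⟩
  · rw [deriv_areff_eq_zero_iff (by linarith), ← hroot]
    exact strictAntiOn_logAreffDerivNumer.injOn.eq_iff (mem_Iio.2 (by linarith)) hρc
  · rw [areff_eq_exp_logAreff (by linarith), areff_eq_exp_logAreff hρc, exp_le_exp]
    refine le_of_hasDerivAt_pos_of_neg hρc (fun y hy => hasDerivAt_logAreff hy)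
      (fun y hy => ?_) (fun y hy => ?_) (by linarith)
    · have := strictAntiOn_logAreffDerivNumer (mem_Iio.2 (by linarith)) hρc hy
      exact div_pos (hroot ▸ this) (by nlinarith)
    · have := strictAntiOn_logAreffDerivNumer hρc hy.2 hy.1
      exact div_neg_of_neg_of_pos (hroot ▸ this) (by nlinarith [hy.2])
end
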